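/- Let N ≥ 1 be an integer, ψ ∈ (−π/2, π/2) and c > 0, and set z = i·c·e^{−iψ}. Then the function A ↦ Tr[(1_N − z·A)^{−2}] is absolutely integrable with respect to μ_G and |∫_{H_N} Tr[(1_N − z·A)^{−2}] dμ_G(A)| ≤ N/cos²ψ. Consequently, if λ, a ∈ ℂ ∖ {0} satisfy λ/a² = x·e^{−2iψ} with x > 0, then the trivial-tree LVE amplitude A_{T₁} = −(λ/a²)·(1/2)·∫_{H_N} Tr[(1_N − i·(√x/√N)·e^{−iψ}·A)^{−2}] dμ_G(A) satisfies |A_{T₁}| ≤ (N/2)·|λ/a²|·(1/cos²ψ). -/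

import Mathlib

open Matrix Complex MeasureTheory

noncomputable instance matrixMeasurableSpace (m n : Type*) : MeasurableSpace (Matrix m n ℂ) :=
  inferInstanceAs (MeasurableSpace (m → n → ℂ))

/-- `H_N`: the real vector space of `N × N` complex Hermitian matrices. -/
abbrev HermSpace (N : ℕ) : Type := ↥(selfAdjoint (Matrix (Fin N) (Fin N) ℂ))

/-- The (unnormalized) Gaussian density `exp(−(1/2) Tr A²)` on `H_N`. -/
noncomputable def gaussDensity (N : ℕ) (A : HermSpace N) : ENNReal :=
  ENNReal.ofReal (Real.exp (-(1 / 2) *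
    (((A : Matrix (Fin N) (Fin N) ℂ) * (A : Matrix (Fin N) (Fin N) ℂ)).trace).re))

/-- The Gaussian probability measure `μ_G` on `H_N`, built from an additive Haar
(Lebesgue) measure `ν` on `H_N`, normalized to total mass `1`. -/
noncomputable def gaussMeasure (N : ℕ) (ν : Measure (HermSpace N)) : Measure (HermSpace N) :=
  (∫⁻ A, gaussDensity N A ∂ν)⁻¹ • ν.withDensity (gaussDensity N)

/-! On the eigenbasis of `A` the matrix `1 - zA` is diagonal with entries `1 - z t`,
`t ∈ ℝ` an eigenvalue, so `Tr[(1 - zA)^{-2}] = ∑ (1 - z t)^{-2}`. For `z = i c e^{-iψ}` we have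
`|1 - z t|² = (ct - sin ψ)² + cos² ψ ≥ cos² ψ`: the line `z ℝ` passes at distance `cos ψ`
from `1`. The integrand is therefore bounded by `N / cos² ψ` pointwise, and `μ_G` has total
mass at most `1`. -/

instance Matrix.borelSpace {m n : Type*} [Countable m] [Countable n] :
    BorelSpace (Matrix m n ℂ) :=
  inferInstanceAs (BorelSpace (m → n → ℂ))

section Measurability

variable {n : Type*} [Fintype n] [DecidableEq n]

theorem Matrix.measurable_inv : Measurable fun M : Matrix n n ℂ => M⁻¹ := by
  refine measurable_pi_iff.2 fun i => measurable_pi_iff.2 fun j => ?_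
  simp only [Matrix.inv_def, Ring.inverse_eq_inv', Matrix.smul_apply, smul_eq_mul]
  exact (continuous_id.matrix_det.measurable.inv).mul
    (continuous_id.matrix_adjugate.matrix_elem i j).measurable

theorem measurable_trace_inv_one_sub_smul_pow (z : ℂ) (k : ℕ) :
    Measurable fun M : Matrix n n ℂ => (((1 - z • M)⁻¹) ^ k).trace :=
  (continuous_id.pow k).matrix_trace.measurable.comp <|
    Matrix.measurable_inv.comp (continuous_const.sub (continuous_const_smul z)).measurable

end Measurability

theorem Matrix.IsHermitian.trace_inv_one_sub_smul_pow {n : Type*} [Fintype n]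
    [DecidableEq n] {A : Matrix n n ℂ} (hA : A.IsHermitian) {z : ℂ}
    (hz : ∀ i, 1 - z * hA.eigenvalues i ≠ 0) (k : ℕ) :
    (((1 - z • A)⁻¹) ^ k).trace = ∑ i, (1 - z * hA.eigenvalues i)⁻¹ ^ k := by
  set φ := Unitary.conjStarAlgAut ℂ _ hA.eigenvectorUnitary
  set d : n → ℂ := fun i => 1 - z * hA.eigenvalues i
  have hdiag : 1 - z • A = φ (diagonal d) := by
    conv_lhs => rw [hA.spectral_theorem]
    rw [← map_one φ, ← map_smul, ← map_sub, ← diagonal_one, ← diagonal_smul, diagonal_sub]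
    rfl
  have hinv : (φ (diagonal d))⁻¹ = φ (diagonal d⁻¹) := by
    refine inv_eq_right_inv ?_
    rw [← map_mul, diagonal_mul_diagonal, ← map_one φ, ← diagonal_one]
    congr 2
    exact funext fun i => mul_inv_cancel₀ (hz i)
  rw [hdiag, hinv, ← map_pow, diagonal_pow, Unitary.conjStarAlgAut_apply, trace_mul_cycle,
    Unitary.coe_star_mul_self, one_mul, trace_diagonal]
  rfl

theorem Complex.normSq_one_sub_I_mul_exp_mul (ψ s : ℝ) :
    normSq (1 - I * exp (-(ψ : ℂ) * I) * s) = (s - Real.sin ψ) ^ 2 + Real.cos ψ ^ 2 := by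
  rw [exp_mul_I, normSq_apply]
  simp only [cos_neg, ← ofReal_cos, sin_neg, ← ofReal_sin, neg_mul, sub_re, one_re, mul_re,
    I_re, add_re, ofReal_re, neg_re, mul_zero, ofReal_im, I_im, mul_one, sub_self, neg_zero,
    add_zero, zero_mul, add_im, neg_im, mul_im, zero_add, mul_neg, one_mul, sub_neg_eq_add,
    sub_zero, sub_im, one_im, zero_sub, neg_neg]
  linear_combination (s ^ 2 - 1) * Real.sin_sq_add_cos_sq ψ

theorem Complex.abs_cos_le_norm_one_sub_I_mul_exp_mul (ψ s : ℝ) :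
    |Real.cos ψ| ≤ ‖1 - I * exp (-(ψ : ℂ) * I) * s‖ := by
  rw [← Real.sqrt_sq_eq_abs, norm_def, normSq_one_sub_I_mul_exp_mul]
  exact Real.sqrt_le_sqrt (le_add_of_nonneg_left (sq_nonneg _))

theorem Matrix.IsHermitian.norm_trace_inv_one_sub_smul_pow_le {n : Type*} [Fintype n]
    [DecidableEq n] {A : Matrix n n ℂ} (hA : A.IsHermitian) {ψ : ℝ} (hψ : 0 < Real.cos ψ)
    (c : ℝ) (k : ℕ) :
    ‖(((1 - (I * c * Complex.exp (-(ψ : ℂ) * I)) • A)⁻¹) ^ k).trace‖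
      ≤ Fintype.card n / Real.cos ψ ^ k := by
  set z : ℂ := I * c * Complex.exp (-(ψ : ℂ) * I)
  have hlower : ∀ i, Real.cos ψ ≤ ‖1 - z * hA.eigenvalues i‖ := fun i => by
    have h := Complex.abs_cos_le_norm_one_sub_I_mul_exp_mul ψ (c * hA.eigenvalues i)
    rw [abs_of_pos hψ] at h
    convert h using 3
    push_cast
    ring
  have hterm : ∀ i, ‖(1 - z * hA.eigenvalues i)⁻¹ ^ k‖ ≤ (Real.cos ψ ^ k)⁻¹ := fun i => by
    rw [norm_pow, norm_inv, inv_pow]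
    exact inv_anti₀ (by positivity) (pow_le_pow_left₀ hψ.le (hlower i) k)
  rw [hA.trace_inv_one_sub_smul_pow (fun i => norm_pos_iff.1 (hψ.trans_le (hlower i))),
    div_eq_mul_inv]
  calc _ ≤ ∑ i, ‖(1 - z * hA.eigenvalues i)⁻¹ ^ k‖ := norm_sum_le _ _
    _ ≤ ∑ _i : n, (Real.cos ψ ^ k)⁻¹ := Finset.sum_le_sum fun i _ => hterm i
    _ = _ := by rw [Finset.sum_const, Finset.card_univ, nsmul_eq_mul]

theorem gaussMeasure_univ_le_one (N : ℕ) (ν : Measure (HermSpace N)) :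
    gaussMeasure N ν Set.univ ≤ 1 := by
  rw [gaussMeasure, Measure.smul_apply, smul_eq_mul, withDensity_apply _ MeasurableSet.univ,
    setLIntegral_univ]
  exact ENNReal.inv_mul_le_one _

instance (N : ℕ) (ν : Measure (HermSpace N)) : IsFiniteMeasure (gaussMeasure N ν) :=
  ⟨(gaussMeasure_univ_le_one N ν).trans_lt ENNReal.one_lt_top⟩

theorem integrable_trace_inv_one_sub_smul_pow_and_norm_integral_le {N : ℕ} {ψ : ℝ}
    (hψ : 0 < Real.cos ψ) (c : ℝ) (k : ℕ) (ν : Measure (HermSpace N)) :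
    let f := fun A : HermSpace N => (((1 - (I * c * Complex.exp (-(ψ : ℂ) * I)) •
      (A : Matrix (Fin N) (Fin N) ℂ))⁻¹) ^ k).trace
    Integrable f (gaussMeasure N ν) ∧ ‖∫ A, f A ∂gaussMeasure N ν‖ ≤ N / Real.cos ψ ^ k := by
  intro f
  have hbound : ∀ᵐ A ∂gaussMeasure N ν, ‖f A‖ ≤ N / Real.cos ψ ^ k :=
    ae_of_all _ fun A => by
      simpa only [Fintype.card_fin] using
        Matrix.IsHermitian.norm_trace_inv_one_sub_smul_pow_le A.2 hψ c k
  have hmeas : Measurable f :=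
    (measurable_trace_inv_one_sub_smul_pow _ k).comp measurable_subtype_coe
  refine ⟨Integrable.of_bound hmeas.aestronglyMeasurable _ hbound, ?_⟩
  calc _ ≤ N / Real.cos ψ ^ k * (gaussMeasure N ν).real Set.univ :=
        norm_integral_le_of_norm_le_const hbound
    _ ≤ N / Real.cos ψ ^ k := by
        refine mul_le_of_le_one_right (by positivity) ?_
        exact ENNReal.toReal_le_of_le_ofReal zero_le_one
          (ENNReal.ofReal_one ▸ gaussMeasure_univ_le_one N ν)

theorem trivial_tree_amplitude_bound_general (N : ℕ)
    (ψ : ℝ) (hψ : ψ ∈ Set.Ioo (-(Real.pi / 2)) (Real.pi / 2)) (c : ℝ)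
    (ν : Measure (HermSpace N)) :
    (Integrable (fun A : HermSpace N =>
        ((((1 : Matrix (Fin N) (Fin N) ℂ)
            - (Complex.I * c * Complex.exp (-(ψ : ℂ) * Complex.I)) •
                (A : Matrix (Fin N) (Fin N) ℂ))⁻¹ ^ 2).trace)) (gaussMeasure N ν) ∧
      ‖∫ A : HermSpace N,
          ((((1 : Matrix (Fin N) (Fin N) ℂ)
              - (Complex.I * c * Complex.exp (-(ψ : ℂ) * Complex.I)) •
                  (A : Matrix (Fin N) (Fin N) ℂ))⁻¹ ^ 2).trace)
          ∂(gaussMeasure N ν)‖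
        ≤ N / Real.cos ψ ^ 2) ∧
    (∀ lam a : ℂ, lam ≠ 0 → a ≠ 0 → ∀ x : ℝ, 0 < x →
      lam / a ^ 2 = (x : ℂ) * Complex.exp (-(2 * ψ : ℂ) * Complex.I) →
      ‖-(lam / a ^ 2) * (1 / 2) *
          ∫ A : HermSpace N,
            ((((1 : Matrix (Fin N) (Fin N) ℂ)
                - (Complex.I * ((Real.sqrt x / Real.sqrt N : ℝ) : ℂ) *
                    Complex.exp (-(ψ : ℂ) * Complex.I)) •
                    (A : Matrix (Fin N) (Fin N) ℂ))⁻¹ ^ 2).trace)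
            ∂(gaussMeasure N ν)‖
        ≤ (N / 2) * ‖lam / a ^ 2‖ * (1 / Real.cos ψ ^ 2)) := by
  have hcos : 0 < Real.cos ψ := Real.cos_pos_of_mem_Ioo hψ
  refine ⟨integrable_trace_inv_one_sub_smul_pow_and_norm_integral_le hcos c 2 ν,
    fun lam a _ _ x _ _ => ?_⟩
  have hint := (integrable_trace_inv_one_sub_smul_pow_and_norm_integral_le hcos
    (Real.sqrt x / Real.sqrt N) 2 ν).2
  rw [norm_mul, norm_mul, norm_neg, one_div, norm_inv, Complex.norm_ofNat]
  calc _ ≤ ‖lam / a ^ 2‖ * 2⁻¹ * (N / Real.cos ψ ^ 2) := by gcongr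
    _ = (N / 2) * ‖lam / a ^ 2‖ * (1 / Real.cos ψ ^ 2) := by ring

/-- With `z = i c e^{−iψ}` (`c > 0`, `ψ ∈ (−π/2, π/2)`), the function
`A ↦ Tr[(1 − zA)^{−2}]` is `μ_G`-integrable with `|∫ Tr[(1 − zA)^{−2}] dμ_G| ≤ N/cos²ψ`.
Consequently, if `λ, a ≠ 0` satisfy `λ/a² = x e^{−2iψ}` with `x > 0`, the trivial-tree LVE
amplitude `A_{T₁} = −(λ/a²)(1/2) ∫ Tr[(1 − i(√x/√N)e^{−iψ}A)^{−2}] dμ_G` satisfies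
`|A_{T₁}| ≤ (N/2)·|λ/a²|·(1/cos²ψ)`. -/
theorem trivial_tree_amplitude_bound (N : ℕ) (hN : 1 ≤ N)
    (ψ : ℝ) (hψ : ψ ∈ Set.Ioo (-(Real.pi / 2)) (Real.pi / 2)) (c : ℝ) (hc : 0 < c)
    (ν : Measure (HermSpace N)) (hν : ν.IsAddHaarMeasure) :
    (Integrable (fun A : HermSpace N =>
        ((((1 : Matrix (Fin N) (Fin N) ℂ)
            - (Complex.I * c * Complex.exp (-(ψ : ℂ) * Complex.I)) •
                (A : Matrix (Fin N) (Fin N) ℂ))⁻¹ ^ 2).trace)) (gaussMeasure N ν) ∧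
      ‖∫ A : HermSpace N,
          ((((1 : Matrix (Fin N) (Fin N) ℂ)
              - (Complex.I * c * Complex.exp (-(ψ : ℂ) * Complex.I)) •
                  (A : Matrix (Fin N) (Fin N) ℂ))⁻¹ ^ 2).trace)
          ∂(gaussMeasure N ν)‖
        ≤ N / Real.cos ψ ^ 2) ∧
    (∀ lam a : ℂ, lam ≠ 0 → a ≠ 0 → ∀ x : ℝ, 0 < x →
      lam / a ^ 2 = (x : ℂ) * Complex.exp (-(2 * ψ : ℂ) * Complex.I) →
      ‖-(lam / a ^ 2) * (1 / 2) *
          ∫ A : HermSpace N,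
            ((((1 : Matrix (Fin N) (Fin N) ℂ)
                - (Complex.I * ((Real.sqrt x / Real.sqrt N : ℝ) : ℂ) *
                    Complex.exp (-(ψ : ℂ) * Complex.I)) •
                    (A : Matrix (Fin N) (Fin N) ℂ))⁻¹ ^ 2).trace)
            ∂(gaussMeasure N ν)‖
        ≤ (N / 2) * ‖lam / a ^ 2‖ * (1 / Real.cos ψ ^ 2)) :=
  trivial_tree_amplitude_bound_general N ψ hψ c ν
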